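/- arXiv:1201.2780 — 4 statements merged into one kernel-verified Lean document; each statement's English description precedes it below -/
import Mathlib

section
/- Let T be a finite rooted tree and let M ⊆ V(T) be a set of nodes such that for all u, v ∈ M the least common ancestor of u and v belongs to M. Let T' be a nonempty subtree (connected subgraph) of T with V(T') ∩ M = ∅. Then at most two nodes of M are adjacent in T to a node of T'. -/
/-- In a tree `T` rooted at `root`, `u` is an ancestor of `v` if `u` lies on every
(equivalently, by uniqueness of paths in a tree, on the) path from `root` to `v`.
Every node is an ancestor of itself. -/
def IsAncestor {V : Type*} (T : SimpleGraph V) (root u v : V) : Prop :=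
  ∀ p : T.Walk root v, p.IsPath → u ∈ p.support

/-- In a tree `T` rooted at `root`, `m` is the least common ancestor of `u` and `v` if it is
a common ancestor of `u` and `v` of greatest depth (depth being the distance from the root). -/
def IsLCA {V : Type*} (T : SimpleGraph V) (root u v m : V) : Prop :=
  IsAncestor T root m u ∧ IsAncestor T root m v ∧
    ∀ w : V, IsAncestor T root w u → IsAncestor T root w v →
      T.dist root w ≤ T.dist root m

/-! Call `N` the set of vertices of `M` adjacent to `S`. The tree path between two vertices
`x ≠ y` of `N` runs through `S` except at its ends, so it meets `M` only in `x` and `y`.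
The least common ancestor of `x` and `y` lies on that path and belongs to `M`, hence is
`x` or `y`: the ancestor relation is total on `N`. A chain `x < y < z` in `N` is impossible,
because `y` would lie on the path from `x` to `z`. -/

open SimpleGraph Walk

theorem Set.ncard_le_two_of_total_of_not_chain {α : Type*} {s : Set α} (r : α → α → Prop)
    (htotal : ∀ x ∈ s, ∀ y ∈ s, x ≠ y → r x y ∨ r y x)
    (hchain : ∀ x ∈ s, ∀ y ∈ s, ∀ z ∈ s, x ≠ y → y ≠ z → x ≠ z → ¬(r x y ∧ r y z)) :
    s.ncard ≤ 2 := by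
  by_contra! h
  obtain ⟨a, ha, b, hb, c, hc, hab, hac, hbc⟩ :=
    (Set.two_lt_ncard (Set.finite_of_ncard_pos (by omega))).1 h
  -- every tournament on three vertices has a directed path through all of them
  rcases htotal a ha b hb hab with _ | _ <;> rcases htotal a ha c hc hac with _ | _ <;>
    rcases htotal b hb c hc hbc with _ | _ <;> grind

theorem SimpleGraph.Walk.IsPath.append_of_support_inter {V : Type*} {G : SimpleGraph V}
    {u v w : V} {p : G.Walk u v} {q : G.Walk v w} (hp : p.IsPath) (hq : q.IsPath)
    (h : ∀ x ∈ p.support, x ∈ q.support → x = v) : (p.append q).IsPath := by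
  rw [isPath_def, support_append]
  refine hp.support_nodup.append hq.support_nodup.tail fun x hxp hxq ↦ ?_
  have hv : v ∉ q.support.tail := (List.nodup_cons.1 (q.cons_tail_support ▸ hq.support_nodup)).1
  exact hv (h x hxp (List.mem_of_mem_tail hxq) ▸ hxq)

section Ancestors

variable {V : Type*} {T : SimpleGraph V} {root u v w : V}

theorem SimpleGraph.IsAcyclic.eq_of_isPath (hT : T.IsAcyclic) {p q : T.Walk u v}
    (hp : p.IsPath) (hq : q.IsPath) : p = q :=
  congrArg Subtype.val ((hT.subsingleton_path u v).elim ⟨p, hp⟩ ⟨q, hq⟩)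

theorem SimpleGraph.IsAcyclic.length_eq_dist (hT : T.IsAcyclic) {p : T.Walk u v}
    (hp : p.IsPath) : p.length = T.dist u v := by
  obtain ⟨q, hq, hlen⟩ := p.reachable.exists_path_of_dist
  rw [← hlen, hT.eq_of_isPath hp hq]

theorem isAncestor_iff_mem_support (hT : T.IsAcyclic) {p : T.Walk root v} (hp : p.IsPath) :
    IsAncestor T root u v ↔ u ∈ p.support :=
  ⟨fun h ↦ h p hp, fun h _ hq ↦ hT.eq_of_isPath hp hq ▸ h⟩

theorem IsAncestor.trans (huv : IsAncestor T root u v) (hvw : IsAncestor T root v w) :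
    IsAncestor T root u w := by
  classical
  intro p hp
  have hv := hvw p hp
  exact p.support_takeUntil_subset_support hv (huv _ (hp.takeUntil hv))

theorem IsAncestor.dist_lt (hT : T.IsTree) (h : IsAncestor T root u v) (huv : u ≠ v) :
    T.dist root u < T.dist root v := by
  classical
  obtain ⟨p, hp⟩ := (hT.connected root v).exists_isPath
  have hu := h p hp
  rw [← hT.isAcyclic.length_eq_dist hp, ← hT.isAcyclic.length_eq_dist (hp.takeUntil hu)]
  exact length_takeUntil_lt_length hu huv

theorem IsAncestor.dist_le (hT : T.IsTree) (h : IsAncestor T root u v) :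
    T.dist root u ≤ T.dist root v := by
  rcases eq_or_ne u v with rfl | huv
  exacts [le_rfl, (h.dist_lt hT huv).le]

theorem IsAncestor.antisymm (hT : T.IsTree) (huv : IsAncestor T root u v)
    (hvu : IsAncestor T root v u) : u = v := by
  by_contra hne
  exact (huv.dist_lt hT hne).not_ge (hvu.dist_le hT)

theorem IsAncestor.mem_support_of_isAncestor (hT : T.IsTree) (huv : IsAncestor T root u v)
    (hvw : IsAncestor T root v w) {p : T.Walk u w} (hp : p.IsPath) : v ∈ p.support := by
  classical
  obtain ⟨r, hr⟩ := (hT.connected root w).exists_isPath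
  have hu := huv.trans hvw r hr
  have hp_eq : r.dropUntil u hu = p :=
    hT.isAcyclic.eq_of_isPath (hr.dropUntil hu) hp
  have hv := hvw r hr
  rw [← r.take_spec hu, mem_support_append_iff, hp_eq] at hv
  rcases hv with hv | hv
  · have hvu : IsAncestor T root v u :=
      (isAncestor_iff_mem_support hT.isAcyclic (hr.takeUntil hu)).2 hv
    exact huv.antisymm hT hvu ▸ p.start_mem_support
  · exact hv

theorem exists_isLCA_mem_support (hT : T.IsTree) (root : V) {p : T.Walk u v} (hp : p.IsPath) :
    ∃ m ∈ p.support, IsLCA T root u v m := by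
  classical
  obtain ⟨m, hmp, hmin⟩ :=
    p.support.toFinset.exists_min_image (T.dist root) ⟨u, by simp⟩
  simp only [List.mem_toFinset] at hmp hmin
  obtain ⟨r, hr⟩ := (hT.connected root m).exists_isPath
  -- `m` is a shallowest vertex of `p`, so the path from the root to `m` meets `p` only in `m`
  have hr_inter : ∀ x ∈ r.support, x ∈ p.support → x = m := by
    intro x hxr hxp
    by_contra hxm
    have hx : IsAncestor T root x m := (isAncestor_iff_mem_support hT.isAcyclic hr).2 hxr
    exact (hx.dist_lt hT hxm).not_ge (hmin x hxp)
  have hpm : ((p.takeUntil m hmp).append (p.dropUntil m hmp)).IsPath := by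
    rwa [p.take_spec hmp]
  set pu := (p.takeUntil m hmp).reverse
  set pv := p.dropUntil m hmp
  have hru : (r.append pu).IsPath := hr.append_of_support_inter (hp.takeUntil hmp).reverse
    fun x hxr hxu ↦
      hr_inter x hxr (p.support_takeUntil_subset_support hmp (by simpa [pu] using hxu))
  have hrv : (r.append pv).IsPath := hr.append_of_support_inter (hp.dropUntil hmp)
    fun x hxr hxv ↦ hr_inter x hxr (p.support_dropUntil_subset_support hmp hxv)
  refine ⟨m, hmp, (isAncestor_iff_mem_support hT.isAcyclic hru).2 (by simp),
    (isAncestor_iff_mem_support hT.isAcyclic hrv).2 (by simp), fun x hxu hxv ↦ ?_⟩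
  rw [isAncestor_iff_mem_support hT.isAcyclic hru, mem_support_append_iff] at hxu
  rw [isAncestor_iff_mem_support hT.isAcyclic hrv, mem_support_append_iff] at hxv
  rcases hxu with hxr | hxu
  · exact ((isAncestor_iff_mem_support hT.isAcyclic hr).2 hxr).dist_le hT
  rcases hxv with hxr | hxv
  · exact ((isAncestor_iff_mem_support hT.isAcyclic hr).2 hxr).dist_le hT
  by_contra hlt
  rw [support_reverse, List.mem_reverse] at hxu
  exact hpm.ne_of_mem_support_of_append (fun h ↦ hlt (h ▸ le_rfl)) hxu hxv rfl

theorem SimpleGraph.IsAcyclic.mem_of_mem_support_of_adj_of_connected (hT : T.IsAcyclic)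
    {S : Set V} (hconn : (T.induce S).Connected) {a b sa sb x : V}
    (ha : T.Adj a sa) (hsa : sa ∈ S) (hb : T.Adj b sb) (hsb : sb ∈ S)
    (haS : a ∉ S) (hbS : b ∉ S) (hab : a ≠ b) {p : T.Walk a b} (hp : p.IsPath)
    (hx : x ∈ p.support) (hxa : x ≠ a) (hxb : x ≠ b) : x ∈ S := by
  classical
  obtain ⟨q, hq, hqS⟩ : ∃ q : T.Walk sa sb, q.IsPath ∧ ∀ y ∈ q.support, y ∈ S := by
    obtain ⟨q'⟩ := hconn.preconnected ⟨sa, hsa⟩ ⟨sb, hsb⟩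
    refine ⟨(q'.map (Embedding.induce S).toHom).bypass, bypass_isPath _, fun y hy ↦ ?_⟩
    obtain ⟨y', -, rfl⟩ :=
      List.mem_map.1 (q'.support_map _ ▸ support_bypass_subset_support _ hy)
    exact y'.2
  have hW : (cons ha (q.concat hb.symm)).IsPath := by
    refine (hq.concat (fun h ↦ hbS (hqS b h)) hb.symm).cons ?_
    rw [support_concat, List.mem_append, List.mem_singleton]
    exact fun h ↦ h.elim (fun h ↦ haS (hqS a h)) hab
  rw [hT.eq_of_isPath hp hW, support_cons, support_concat] at hx
  exact hqS x (by simpa [hxa, hxb] using hx)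

end Ancestors

theorem lca_closed_neighbors_of_unmarked_subtree_general {V : Type*}
    (T : SimpleGraph V) (hT : T.IsTree) (root : V)
    (M : Set V)
    (hM : ∀ u ∈ M, ∀ v ∈ M, ∀ m : V, IsLCA T root u v m → m ∈ M)
    (S : Set V) (hconn : (T.induce S).Connected)
    (hdisj : S ∩ M = ∅) :
    {m ∈ M | ∃ v ∈ S, T.Adj m v}.ncard ≤ 2 := by
  set N := {m ∈ M | ∃ v ∈ S, T.Adj m v}
  have hMS : ∀ x ∈ M, x ∉ S := fun x hxM hxS ↦ hdisj.subset ⟨hxS, hxM⟩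
  have hends : ∀ x ∈ N, ∀ y ∈ N, x ≠ y → ∀ p : T.Walk x y, p.IsPath →
      ∀ w ∈ p.support, w ∈ M → w = x ∨ w = y := by
    rintro x ⟨hxM, sx, hsx, hx⟩ y ⟨hyM, sy, hsy, hy⟩ hxy p hp w hw hwM
    by_contra! hne
    exact hMS w hwM (hT.isAcyclic.mem_of_mem_support_of_adj_of_connected hconn hx hsx hy hsy
      (hMS x hxM) (hMS y hyM) hxy hp hw hne.1 hne.2)
  refine Set.ncard_le_two_of_total_of_not_chain (IsAncestor T root) ?_ ?_
  · intro x hx y hy hxy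
    obtain ⟨p, hp⟩ := (hT.connected x y).exists_isPath
    obtain ⟨m, hm, hlca⟩ := exists_isLCA_mem_support hT root hp
    rcases hends x hx y hy hxy p hp m hm (hM x hx.1 y hy.1 m hlca) with rfl | rfl
    exacts [Or.inl hlca.2.1, Or.inr hlca.1]
  · rintro x hx y hy z hz hxy hyz hxz ⟨hxy', hyz'⟩
    obtain ⟨p, hp⟩ := (hT.connected x z).exists_isPath
    rcases hends x hx z hz hxz p hp y (hxy'.mem_support_of_isAncestor hT hyz' hp) hy.1 with h | h
    exacts [hxy h.symm, hyz h]

/-- Let `T` be a finite rooted tree and `M` a set of nodes closed under least common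
ancestors.  If `T'` is a nonempty subtree (connected subgraph, given by its vertex set `S`)
of `T` containing no node of `M`, then at most two nodes of `M` are adjacent in `T` to a
node of `T'`. -/
theorem lca_closed_neighbors_of_unmarked_subtree {V : Type*} [Fintype V]
    (T : SimpleGraph V) (hT : T.IsTree) (root : V)
    (M : Set V)
    (hM : ∀ u ∈ M, ∀ v ∈ M, ∀ m : V, IsLCA T root u v m → m ∈ M)
    (S : Set V) (hS : S.Nonempty) (hconn : (T.induce S).Connected)
    (hdisj : S ∩ M = ∅) :
    {m ∈ M | ∃ v ∈ S, T.Adj m v}.ncard ≤ 2 :=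
  lca_closed_neighbors_of_unmarked_subtree_general T hT root M hM S hconn hdisj
end

section
/- Let (T, {X_i}_{i∈V(T)}) be a tree decomposition of a connected finite simple graph G, let b be a node of T whose bag B = X_b is nonempty, let t₁, …, t_p be some of the neighbors of b in T, let T_i be the connected component of T − b containing t_i, and let V_i be the union of the bags of the nodes of T_i. Then the induced subgraph G[B ∪ V₁ ∪ ⋯ ∪ V_p] has at most |B| connected components. -/
/-!
Every vertex of `S = B ∪ V₁ ∪ ⋯ ∪ V_p` outside `B` has all its `G`-neighbours in `S`: such a
vertex `v` lies in some `V_i`, its bags form a subtree of `T` missing `b`, so every bag containing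
an edge at `v` is still in the component `T_i` of `T − b`. Hence following a walk of `G` from any
vertex of `S` towards a vertex of `B` stays inside `S` until it first meets `B`, so every
component of `G[S]` meets `B`.
-/

/-- A tree decomposition of a graph `G` over a tree `T`: every vertex lies in some bag,
every edge has both endpoints in a common bag, and for each vertex the set of nodes whose
bag contains it induces a subtree of `T`. -/
structure TreeDecomp {V ι : Type*} (G : SimpleGraph V) (T : SimpleGraph ι) where
  isTree : T.IsTree
  bag : ι → Set V
  exists_bag : ∀ v : V, ∃ i : ι, v ∈ bag i
  adj_bag : ∀ ⦃u v : V⦄, G.Adj u v → ∃ i : ι, u ∈ bag i ∧ v ∈ bag i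
  bag_connected : ∀ v : V, (T.induce {i : ι | v ∈ bag i}).Connected

namespace SimpleGraph

variable {V : Type*} {G : SimpleGraph V} {B S : Set V}

lemma exists_mem_reachable_induce_of_walk (hBS : B ⊆ S)
    (hclosed : ∀ v ∈ S, v ∉ B → ∀ w, G.Adj v w → w ∈ S) {v w : V} (q : G.Walk v w)
    (hw : w ∈ B) (hv : v ∈ S) : ∃ u, ∃ hu : u ∈ B, (G.induce S).Reachable ⟨v, hv⟩ ⟨u, hBS hu⟩ := by
  induction q with
  | nil => exact ⟨_, hw, .rfl⟩
  | @cons v v' w hadj q ih =>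
    by_cases hvB : v ∈ B
    · exact ⟨v, hvB, .rfl⟩
    have hv' : v' ∈ S := hclosed v hv hvB v' hadj
    obtain ⟨u, hu, hreach⟩ := ih hw hv'
    exact ⟨u, hu, (show (G.induce S).Adj ⟨v, hv⟩ ⟨v', hv'⟩ from hadj).reachable.trans hreach⟩

lemma card_connectedComponent_induce_le_ncard (hG : G.Connected) (hB : B.Nonempty)
    (hBfin : B.Finite) (hBS : B ⊆ S) (hclosed : ∀ v ∈ S, v ∉ B → ∀ w, G.Adj v w → w ∈ S) :
    Nat.card (G.induce S).ConnectedComponent ≤ B.ncard := by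
  have : Finite B := hBfin
  have hsurj : Function.Surjective
      fun u : B => (G.induce S).connectedComponentMk ⟨u, hBS u.2⟩ := by
    intro c
    obtain ⟨⟨x, hx⟩, rfl⟩ := c.exists_rep
    obtain ⟨b₀, hb₀⟩ := hB
    obtain ⟨q⟩ := hG.preconnected x b₀
    obtain ⟨u, hu, hreach⟩ := exists_mem_reachable_induce_of_walk hBS hclosed q hb₀ hx
    exact ⟨⟨u, hu⟩, (ConnectedComponent.sound hreach).symm⟩
  exact (Nat.card_le_card_of_surjective _ hsurj).trans_eq (Nat.card_coe_set_eq B)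

end SimpleGraph

namespace TreeDecomp

variable {V ι : Type*} {G : SimpleGraph V} {T : SimpleGraph ι}

lemma exists_walk_not_mem_support_of_mem_bag (td : TreeDecomp G T) {a b j k : ι} {v : V}
    (hvb : v ∉ td.bag b) (hj : v ∈ td.bag j) (hk : v ∈ td.bag k)
    (w : T.Walk a j) (hw : b ∉ w.support) : ∃ w' : T.Walk a k, b ∉ w'.support := by
  obtain ⟨q⟩ := (td.bag_connected v).preconnected ⟨j, hj⟩ ⟨k, hk⟩
  let q' : T.Walk j k := q.map (SimpleGraph.Embedding.induce _).toHom
  refine ⟨w.append q', fun hb => ?_⟩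
  rw [SimpleGraph.Walk.mem_support_append_iff] at hb
  rcases hb with hb | hb
  · exact hw hb
  · obtain ⟨m, -, rfl⟩ := List.mem_map.mp (q.support_map _ ▸ hb)
    exact hvb m.2

lemma mem_biUnion_bag_of_adj (td : TreeDecomp G T) {a b : ι} {v v' : V}
    (hv : v ∈ ⋃ j ∈ {j : ι | ∃ w : T.Walk a j, b ∉ w.support}, td.bag j)
    (hvb : v ∉ td.bag b) (hadj : G.Adj v v') :
    v' ∈ ⋃ j ∈ {j : ι | ∃ w : T.Walk a j, b ∉ w.support}, td.bag j := by
  obtain ⟨j, ⟨w, hw⟩, hvj⟩ := Set.mem_iUnion₂.mp hv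
  obtain ⟨k, hvk, hv'k⟩ := td.adj_bag hadj
  exact Set.mem_iUnion₂.mpr ⟨k, td.exists_walk_not_mem_support_of_mem_bag hvb hvj hvk w hw, hv'k⟩

end TreeDecomp

theorem components_le_bag_card_general {V ι : Type*} [Fintype V]
    (G : SimpleGraph V) (hG : G.Connected)
    (T : SimpleGraph ι) (td : TreeDecomp G T)
    (b : ι) (hb : (td.bag b).Nonempty)
    (p : ℕ) (t : Fin p → ι)
    (Vi : Fin p → Set V)
    (hVi : ∀ i, Vi i = ⋃ j ∈ {j : ι | ∃ w : T.Walk (t i) j, b ∉ w.support}, td.bag j) :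
    Nat.card (G.induce (td.bag b ∪ ⋃ i, Vi i)).ConnectedComponent ≤ (td.bag b).ncard := by
  refine G.card_connectedComponent_induce_le_ncard hG hb (Set.toFinite _) Set.subset_union_left ?_
  rintro v (hvB | hv) hvB' v' hadj
  · exact absurd hvB hvB'
  obtain ⟨i, hvi⟩ := Set.mem_iUnion.mp hv
  rw [hVi i] at hvi
  exact Or.inr (Set.mem_iUnion.mpr ⟨i, hVi i ▸ td.mem_biUnion_bag_of_adj hvi hvB' hadj⟩)

/-- Let `(T, {X_i})` be a tree decomposition of a connected finite simple graph `G`, `b` a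
node of `T` with nonempty bag `B`, `t₁, …, t_p` some neighbors of `b` in `T`, `T_i` the
connected component of `T − b` containing `t_i` (described via walks avoiding `b`), and
`V_i` the union of the bags of the nodes of `T_i`.  Then `G[B ∪ V₁ ∪ ⋯ ∪ V_p]` has at most
`|B|` connected components. -/
theorem components_le_bag_card {V ι : Type*} [Fintype V] [Fintype ι]
    (G : SimpleGraph V) (hG : G.Connected)
    (T : SimpleGraph ι) (td : TreeDecomp G T)
    (b : ι) (hb : (td.bag b).Nonempty)
    (p : ℕ) (t : Fin p → ι) (ht : ∀ i, T.Adj b (t i))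
    (Vi : Fin p → Set V)
    (hVi : ∀ i, Vi i = ⋃ j ∈ {j : ι | ∃ w : T.Walk (t i) j, b ∉ w.support}, td.bag j) :
    Nat.card (G.induce (td.bag b ∪ ⋃ i, Vi i)).ConnectedComponent ≤ (td.bag b).ncard :=
  components_le_bag_card_general G hG T td b hb p t Vi hVi
end

section
/- Let (T, {X_q}_{q∈V(T)}) be a tree decomposition of a finite simple graph G in which every bag has size at most t, let P be a path in T, and for each node q of P let Y_q be the union of the bags of all connected components of T − V(P) whose unique neighbor on P is q. If |Y_q| ≤ s for every node q of P, then the sequence (X_q ∪ Y_q), taken along the nodes q of P in order, is a path decomposition of G; in particular G has pathwidth at most t + s − 1. -/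
/-- A (finite) list `L` of bags is a path decomposition of `G` if every vertex lies in some
bag, every edge has both endpoints in a common bag, and for every vertex the set of indices
of bags containing it is an interval of consecutive integers. -/
def IsPathDecomp {V : Type*} (G : SimpleGraph V) (L : List (Set V)) : Prop :=
  (∀ v : V, ∃ B ∈ L, v ∈ B) ∧
  (∀ ⦃u v : V⦄, G.Adj u v → ∃ B ∈ L, u ∈ B ∧ v ∈ B) ∧
  (∀ (v : V) (i j k : Fin L.length), i ≤ j → j ≤ k →
    v ∈ L.get i → v ∈ L.get k → v ∈ L.get j)

namespace SimpleGraph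

variable {V : Type*} {G : SimpleGraph V}

lemma Walk.exists_walk_notMem_adj_mem {S : Set V} {u w : V} (p : G.Walk u w) (hu : u ∉ S)
    (hw : w ∈ S) :
    ∃ u' q, q ∈ S ∧ (∃ r : G.Walk u u', ∀ x ∈ r.support, x ∉ S) ∧ G.Adj u' q := by
  induction p with
  | nil => exact absurd hw hu
  | @cons u v w hadj p ih =>
    by_cases hv : v ∈ S
    · exact ⟨u, v, hv, ⟨nil, by simpa using hu⟩, hadj⟩
    · obtain ⟨u', q, hq, ⟨r, hr⟩, hadj'⟩ := ih hv hw
      exact ⟨u', q, hq, ⟨cons hadj r, by simpa [hu] using hr⟩, hadj'⟩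

lemma IsAcyclic.support_subset_of_isPath (hG : G.IsAcyclic) {u v : V} {p : G.Walk u v}
    (hp : p.IsPath) (q : G.Walk u v) : p.support ⊆ q.support := by
  classical
  have hpq : (⟨p, hp⟩ : G.Path u v) = q.toPath := (hG.subsingleton_path u v).elim _ _
  rw [show p = q.bypass from congrArg Subtype.val hpq]
  exact q.support_bypass_subset_support

lemma IsAcyclic.getVert_mem_support_of_isPath (hG : G.IsAcyclic) {a b : V} {P : G.Walk a b}
    (hP : P.IsPath) {i m k : ℕ} (him : i ≤ m) (hmk : m ≤ k)
    (W : G.Walk (P.getVert i) (P.getVert k)) : P.getVert m ∈ W.support := by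
  have hend : (P.drop i).getVert (k - i) = P.getVert k := by
    rw [Walk.drop_getVert, Nat.add_sub_cancel' (him.trans hmk)]
  let segment : G.Walk (P.getVert i) (P.getVert k) := ((P.drop i).take (k - i)).copy rfl hend
  have hsegment : segment.IsPath := by
    simpa only [segment, Walk.isPath_copy] using (hP.drop i).take (k - i)
  have hm : segment.getVert (m - i) = P.getVert m := by
    simp only [segment, Walk.getVert_copy, Walk.take_getVert, Walk.drop_getVert]
    rw [min_eq_right (by omega), Nat.add_sub_cancel' him]
  exact hG.support_subset_of_isPath hsegment W (hm ▸ segment.getVert_mem_support _)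

end SimpleGraph

open SimpleGraph

lemma isPathDecomp_map_support {V ι : Type*} {G : SimpleGraph V} {T : SimpleGraph ι} {a b : ι}
    (P : T.Walk a b) (f : ι → Set V) (hcover : ∀ v, ∃ q ∈ P.support, v ∈ f q)
    (hadj : ∀ ⦃u v⦄, G.Adj u v → ∃ q ∈ P.support, u ∈ f q ∧ v ∈ f q)
    (hinterval : ∀ v i j k, i ≤ j → j ≤ k →
      v ∈ f (P.getVert i) → v ∈ f (P.getVert k) → v ∈ f (P.getVert j)) :
    IsPathDecomp G (P.support.map f) := by
  refine ⟨fun v => ?_, fun u v huv => ?_, fun v i j k hij hjk => ?_⟩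
  · obtain ⟨q, hq, hv⟩ := hcover v
    exact ⟨f q, List.mem_map_of_mem hq, hv⟩
  · obtain ⟨q, hq, hu, hv⟩ := hadj huv
    exact ⟨f q, List.mem_map_of_mem hq, hu, hv⟩
  · simp only [List.get_eq_getElem, List.getElem_map, Walk.support_getElem_eq_getVert]
    exact hinterval v i j k hij hjk

namespace TreeDecomp

variable {V ι : Type*} {G : SimpleGraph V} {T : SimpleGraph ι} (td : TreeDecomp G T)

/-- The set `Y_q` of the paper for `S = V(P)`: the union of the bags of the components of
`T - S` adjacent to `q`. -/
def pendantBags (S : Set ι) (q : ι) : Set V :=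
  ⋃ j ∈ {j : ι | j ∉ S ∧ ∃ j' : ι, (∃ w : T.Walk j j', ∀ x ∈ w.support, x ∉ S) ∧ T.Adj j' q},
    td.bag j

def bagWithPendants (S : Set ι) (q : ι) : Set V := td.bag q ∪ td.pendantBags S q

lemma exists_bag_subset_bagWithPendants {S : Set ι} (hS : S.Nonempty) (j : ι) :
    ∃ q ∈ S, td.bag j ⊆ td.bagWithPendants S q := by
  by_cases hj : j ∈ S
  · exact ⟨j, hj, Set.subset_union_left⟩
  obtain ⟨c, hc⟩ := hS
  obtain ⟨p⟩ := td.isTree.connected.preconnected j c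
  obtain ⟨j', q, hq, hw, hadj⟩ := p.exists_walk_notMem_adj_mem hj hc
  exact ⟨q, hq, fun v hv => Or.inr (Set.mem_biUnion ⟨hj, j', hw, hadj⟩ hv)⟩

lemma exists_walk_of_mem_bagWithPendants {S : Set ι} {q : ι} {v : V}
    (hv : v ∈ td.bagWithPendants S q) :
    ∃ x, v ∈ td.bag x ∧ ∃ W : T.Walk x q, ∀ y ∈ W.support, y ∈ S → y = q := by
  rcases hv with hv | hv
  · exact ⟨q, hv, Walk.nil, by simp⟩
  · simp only [pendantBags, Set.mem_iUnion, Set.mem_ofPred_eq, exists_prop] at hv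
    obtain ⟨x, ⟨-, j', ⟨w, hw⟩, hadj⟩, hvx⟩ := hv
    refine ⟨x, hvx, w.concat hadj, fun y hy hyS => ?_⟩
    rw [Walk.support_concat, List.mem_append, List.mem_singleton] at hy
    exact hy.resolve_left fun hyw => hw y hyw hyS

lemma exists_walk_of_mem_bag_of_mem_bag {v : V} {x₁ x₂ : ι} (h₁ : v ∈ td.bag x₁)
    (h₂ : v ∈ td.bag x₂) : ∃ Ω : T.Walk x₁ x₂, ∀ y ∈ Ω.support, v ∈ td.bag y := by
  obtain ⟨ω⟩ := (td.bag_connected v).preconnected ⟨x₁, h₁⟩ ⟨x₂, h₂⟩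
  have hω : ∀ y ∈ (ω.map (Embedding.induce _).toHom).support, v ∈ td.bag y := by
    simp only [Walk.support_map, List.mem_map]
    rintro _ ⟨⟨y, hy⟩, -, rfl⟩
    exact hy
  exact ⟨_, hω⟩

lemma mem_bagWithPendants_of_le {a b : ι} {P : T.Walk a b} (hP : P.IsPath) {v : V}
    {i j k : ℕ} (hij : i ≤ j) (hjk : j ≤ k)
    (hi : v ∈ td.bagWithPendants {x | x ∈ P.support} (P.getVert i))
    (hk : v ∈ td.bagWithPendants {x | x ∈ P.support} (P.getVert k)) :
    v ∈ td.bagWithPendants {x | x ∈ P.support} (P.getVert j) := by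
  obtain ⟨x₁, hx₁, W₁, hW₁⟩ := td.exists_walk_of_mem_bagWithPendants hi
  obtain ⟨x₂, hx₂, W₂, hW₂⟩ := td.exists_walk_of_mem_bagWithPendants hk
  obtain ⟨Ω, hΩ⟩ := td.exists_walk_of_mem_bag_of_mem_bag hx₁ hx₂
  have hj := td.isTree.isAcyclic.getVert_mem_support_of_isPath hP hij hjk
    ((W₁.reverse.append Ω).append W₂)
  have hjP : P.getVert j ∈ P.support := P.getVert_mem_support j
  simp only [Walk.mem_support_append_iff, Walk.support_reverse, List.mem_reverse] at hj
  rcases hj with (hj | hj) | hj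
  · rwa [hW₁ _ hj hjP]
  · exact Or.inl (hΩ _ hj)
  · rwa [hW₂ _ hj hjP]

lemma isPathDecomp_map_bagWithPendants {a b : ι} {P : T.Walk a b} (hP : P.IsPath) :
    IsPathDecomp G (P.support.map (td.bagWithPendants {x | x ∈ P.support})) := by
  have hcover := td.exists_bag_subset_bagWithPendants (S := {x | x ∈ P.support})
    ⟨a, P.start_mem_support⟩
  refine isPathDecomp_map_support P _ (fun v => ?_) (fun u v huv => ?_)
    (fun v i j k hij hjk => td.mem_bagWithPendants_of_le hP hij hjk)
  · obtain ⟨x, hv⟩ := td.exists_bag v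
    obtain ⟨q, hq, hsub⟩ := hcover x
    exact ⟨q, hq, hsub hv⟩
  · obtain ⟨x, hu, hv⟩ := td.adj_bag huv
    obtain ⟨q, hq, hsub⟩ := hcover x
    exact ⟨q, hq, hsub hu, hsub hv⟩

end TreeDecomp

theorem pathDecomp_along_path_general {V ι : Type*}
    (G : SimpleGraph V) (T : SimpleGraph ι) (td : TreeDecomp G T)
    (t s : ℕ) (hbags : ∀ i : ι, (td.bag i).ncard ≤ t)
    (a b : ι) (P : T.Walk a b) (hP : P.IsPath)
    (Y : ι → Set V)
    (hY : ∀ q : ι, Y q =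
      ⋃ j ∈ {j : ι | j ∉ P.support ∧ ∃ j' : ι,
          (∃ w : T.Walk j j', ∀ x ∈ w.support, x ∉ P.support) ∧ T.Adj j' q},
        td.bag j)
    (hYs : ∀ q ∈ P.support, (Y q).ncard ≤ s) :
    IsPathDecomp G (P.support.map fun q => td.bag q ∪ Y q) ∧
      ∀ B ∈ P.support.map fun q => td.bag q ∪ Y q, B.ncard ≤ t + s := by
  obtain rfl : Y = td.pendantBags {x | x ∈ P.support} := funext hY
  refine ⟨td.isPathDecomp_map_bagWithPendants hP, fun B hB => ?_⟩
  obtain ⟨q, hq, rfl⟩ := List.mem_map.mp hB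
  exact (Set.ncard_union_le _ _).trans (add_le_add (hbags q) (hYs q hq))

/-- Let `(T, {X_q})` be a tree decomposition of `G` with all bags of size at most `t`, `P` a
path in `T`, and for each node `q` of `P` let `Y_q` be the union of the bags of all
connected components of `T − V(P)` whose unique neighbor on `P` is `q`.  If `|Y_q| ≤ s` for
every node `q` of `P`, then the bags `X_q ∪ Y_q`, taken along the nodes `q` of `P` in order,
form a path decomposition of `G`; in particular (all its bags having size at most `t + s`)
`G` has pathwidth at most `t + s − 1`. -/
theorem pathDecomp_along_path {V ι : Type*} [Fintype V] [Fintype ι]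
    (G : SimpleGraph V) (T : SimpleGraph ι) (td : TreeDecomp G T)
    (t s : ℕ) (hbags : ∀ i : ι, (td.bag i).ncard ≤ t)
    (a b : ι) (P : T.Walk a b) (hP : P.IsPath)
    (Y : ι → Set V)
    (hY : ∀ q : ι, Y q =
      ⋃ j ∈ {j : ι | j ∉ P.support ∧ ∃ j' : ι,
          (∃ w : T.Walk j j', ∀ x ∈ w.support, x ∉ P.support) ∧ T.Adj j' q},
        td.bag j)
    (hYs : ∀ q ∈ P.support, (Y q).ncard ≤ s) :
    IsPathDecomp G (P.support.map fun q => td.bag q ∪ Y q) ∧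
      ∀ B ∈ P.support.map fun q => td.bag q ∪ Y q, B.ncard ≤ t + s :=
  pathDecomp_along_path_general G T td t s hbags a b P hP Y hY hYs
end

section
/- Let (T, {X_i}_{i∈V(T)}) be a tree decomposition of a connected finite simple graph G in which every bag has size at most t, let b be a node of T whose bag B = X_b is nonempty, let t₁, …, t_p be some of the neighbors of b in T, let T_i be the connected component of T − b containing t_i, let V_i be the union of the bags of the nodes of T_i, and set W = B ∪ V₁ ∪ ⋯ ∪ V_p. If every connected component of the induced subgraph G[W] has at most s vertices, then |W| ≤ t·s. -/
theorem Set.ncard_le_ncard_mul_of_subset_biUnion {α ι : Type*} [Finite α] {t : Set ι}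
    (ht : t.Finite) {s : ι → Set α} {W : Set α} (hW : W ⊆ ⋃ i ∈ t, s i) {n : ℕ}
    (hs : ∀ i ∈ t, (s i).ncard ≤ n) : W.ncard ≤ t.ncard * n :=
  calc W.ncard ≤ (⋃ i ∈ ht.toFinset, s i).ncard :=
        Set.ncard_le_ncard (by simpa using hW)
    _ ≤ ∑ i ∈ ht.toFinset, (s i).ncard := ht.toFinset.set_ncard_biUnion_le s
    _ ≤ ht.toFinset.card • n := Finset.sum_le_card_nsmul _ _ _ (by simpa using hs)
    _ = t.ncard * n := by rw [smul_eq_mul, Set.ncard_eq_toFinset_card t ht]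

namespace SimpleGraph

variable {V : Type*} (G : SimpleGraph V)

/-- The vertex set of the component of `v` in `G[W]` (empty if `v ∉ W`). -/
def reachWithin (W : Set V) (v : V) : Set V :=
  {w ∈ W | ∃ q : G.Walk v w, ∀ x ∈ q.support, x ∈ W}

variable {G}

theorem exists_walk_within_to_mem_of_walk {B W : Set V}
    (hclosed : ∀ x ∈ W, x ∉ B → ∀ y, G.Adj x y → y ∈ W) {v u : V} (p : G.Walk v u)
    (hu : u ∈ B) (hv : v ∈ W) : ∃ z ∈ B, ∃ q : G.Walk v z, ∀ x ∈ q.support, x ∈ W := by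
  induction p with
  | nil => exact ⟨_, hu, .nil, by simpa using hv⟩
  | @cons v y _ hvy p ih =>
    by_cases hvB : v ∈ B
    · exact ⟨v, hvB, .nil, by simpa using hv⟩
    obtain ⟨z, hzB, q, hq⟩ := ih hu (hclosed v hv hvB y hvy)
    refine ⟨z, hzB, .cons hvy q, ?_⟩
    simpa [Walk.support_cons] using ⟨hv, hq⟩

theorem exists_mem_reachWithin_of_neighbor_mem (hG : G.Connected) {B W : Set V}
    (hB : B.Nonempty) (hclosed : ∀ x ∈ W, x ∉ B → ∀ y, G.Adj x y → y ∈ W)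
    {v : V} (hv : v ∈ W) : ∃ z ∈ B, v ∈ G.reachWithin W z := by
  obtain ⟨u, hu⟩ := hB
  obtain ⟨z, hzB, q, hq⟩ := exists_walk_within_to_mem_of_walk hclosed (hG v u).some hu hv
  exact ⟨z, hzB, hv, q.reverse, by simpa using hq⟩

theorem Reachable.exists_walk_support_subset_of_induce {s : Set V} {u v : s}
    (h : (G.induce s).Reachable u v) : ∃ w : G.Walk u v, ∀ x ∈ w.support, x ∈ s := by
  obtain ⟨w⟩ := h
  have hw : ∀ x ∈ (w.map (Embedding.induce s).toHom).support, x ∈ s := by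
    simp only [Walk.support_map, List.mem_map]
    rintro _ ⟨⟨x, hx⟩, _, rfl⟩
    exact hx
  exact ⟨_, hw⟩

end SimpleGraph

namespace TreeDecomp

variable {V ι : Type*} {G : SimpleGraph V} {T : SimpleGraph ι} (td : TreeDecomp G T)

theorem exists_walk_avoiding_of_mem_bag {b j k : ι} {x : V} (hj : x ∈ td.bag j)
    (hk : x ∈ td.bag k) (hb : x ∉ td.bag b) : ∃ w : T.Walk j k, b ∉ w.support := by
  obtain ⟨w, hw⟩ := (td.bag_connected x ⟨j, hj⟩ ⟨k, hk⟩).exists_walk_support_subset_of_induce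
  exact ⟨w, fun hbw => hb (hw b hbw)⟩

theorem mem_biUnion_bag_of_adj_s13 {b c : ι} {x y : V}
    (hx : x ∈ ⋃ j ∈ {j : ι | ∃ w : T.Walk c j, b ∉ w.support}, td.bag j) (hxb : x ∉ td.bag b)
    (hxy : G.Adj x y) : y ∈ ⋃ j ∈ {j : ι | ∃ w : T.Walk c j, b ∉ w.support}, td.bag j := by
  simp only [Set.mem_iUnion, Set.mem_ofPred_eq] at hx ⊢
  obtain ⟨j, ⟨wj, hwj⟩, hxj⟩ := hx
  obtain ⟨k, hxk, hyk⟩ := td.adj_bag hxy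
  obtain ⟨wjk, hwjk⟩ := td.exists_walk_avoiding_of_mem_bag hxj hxk hxb
  exact ⟨k, ⟨wj.append wjk, by simp [SimpleGraph.Walk.mem_support_append_iff, hwj, hwjk]⟩, hyk⟩

end TreeDecomp

theorem size_le_of_small_components_general {V ι : Type*} [Fintype V]
    (G : SimpleGraph V) (hG : G.Connected)
    (T : SimpleGraph ι) (td : TreeDecomp G T)
    (t : ℕ) (hbags : ∀ i : ι, (td.bag i).ncard ≤ t)
    (b : ι) (hb : (td.bag b).Nonempty)
    (p : ℕ) (tn : Fin p → ι)
    (Vi : Fin p → Set V)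
    (hVi : ∀ i, Vi i = ⋃ j ∈ {j : ι | ∃ w : T.Walk (tn i) j, b ∉ w.support}, td.bag j)
    (W : Set V) (hW : W = td.bag b ∪ ⋃ i, Vi i)
    (s : ℕ)
    (hcomp : ∀ v ∈ W,
      {w ∈ W | ∃ q : G.Walk v w, ∀ x ∈ q.support, x ∈ W}.ncard ≤ s) :
    W.ncard ≤ t * s := by
  have hBW : td.bag b ⊆ W := hW ▸ Set.subset_union_left
  have hclosed : ∀ x ∈ W, x ∉ td.bag b → ∀ y, G.Adj x y → y ∈ W := by
    intro x hxW hxb y hxy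
    rw [hW, Set.mem_union, Set.mem_iUnion] at hxW ⊢
    obtain ⟨i, hxi⟩ := hxW.resolve_left hxb
    rw [hVi] at hxi
    exact Or.inr ⟨i, by rw [hVi]; exact td.mem_biUnion_bag_of_adj_s13 hxi hxb hxy⟩
  have hcover : W ⊆ ⋃ z ∈ td.bag b, G.reachWithin W z := fun v hv => by
    simpa using G.exists_mem_reachWithin_of_neighbor_mem hG hb hclosed hv
  calc W.ncard ≤ (td.bag b).ncard * s :=
        Set.ncard_le_ncard_mul_of_subset_biUnion (Set.toFinite _) hcover
          fun z hz => hcomp z (hBW hz)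
    _ ≤ t * s := Nat.mul_le_mul_right s (hbags b)

/-- Let `(T, {X_i})` be a tree decomposition of a connected finite simple graph `G` with all
bags of size at most `t`, `b` a node of `T` with nonempty bag `B`, `t₁, …, t_p` some
neighbors of `b` in `T`, `T_i` the connected component of `T − b` containing `t_i`
(described via walks avoiding `b`), `V_i` the union of the bags of the nodes of `T_i`, and
`W = B ∪ V₁ ∪ ⋯ ∪ V_p`.  If every connected component of `G[W]` (the set of vertices of `W`
reachable from a given vertex of `W` by walks staying inside `W`) has at most `s` vertices,
then `|W| ≤ t · s`. -/
theorem size_le_of_small_components {V ι : Type*} [Fintype V] [Fintype ι]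
    (G : SimpleGraph V) (hG : G.Connected)
    (T : SimpleGraph ι) (td : TreeDecomp G T)
    (t : ℕ) (hbags : ∀ i : ι, (td.bag i).ncard ≤ t)
    (b : ι) (hb : (td.bag b).Nonempty)
    (p : ℕ) (tn : Fin p → ι) (htn : ∀ i, T.Adj b (tn i))
    (Vi : Fin p → Set V)
    (hVi : ∀ i, Vi i = ⋃ j ∈ {j : ι | ∃ w : T.Walk (tn i) j, b ∉ w.support}, td.bag j)
    (W : Set V) (hW : W = td.bag b ∪ ⋃ i, Vi i)
    (s : ℕ)
    (hcomp : ∀ v ∈ W,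
      {w ∈ W | ∃ q : G.Walk v w, ∀ x ∈ q.support, x ∈ W}.ncard ≤ s) :
    W.ncard ≤ t * s :=
  size_le_of_small_components_general G hG T td t hbags b hb p tn Vi hVi W hW s hcomp
end
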